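/- arXiv:2403.12565 — 2 statements merged into one kernel-verified Lean document; each statement's English description precedes it below -/
import Mathlib

section
/- Let u, û ∈ (0,1) and let ũ ∈ (0,1) lie between u and û, i.e. min(u,û) ≤ ũ ≤ max(u,û). Then 1/(ũ(1−ũ)) ≤ (u/û + (1−u)/(1−û)) · 1/(u(1−u)). -/
lemma aux_concave_min (a b t : ℝ) (h1 : a ≤ t) (h2 : t ≤ b)
    (hc : a * (1 - a) ≤ b * (1 - b)) : a * (1 - a) ≤ t * (1 - t) := by
  rcases le_total (a + t) 1 with h | h
  · nlinarith [mul_nonneg (sub_nonneg.mpr h1) (by linarith : (0:ℝ) ≤ 1 - a - t)]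
  · nlinarith [mul_nonneg (sub_nonneg.mpr h2) (by linarith : (0:ℝ) ≤ b + t - 1)]

lemma aux_concave_min' (a b t : ℝ) (h1 : a ≤ t) (h2 : t ≤ b)
    (hc : b * (1 - b) ≤ a * (1 - a)) : b * (1 - b) ≤ t * (1 - t) := by
  have := aux_concave_min (1 - b) (1 - a) (1 - t) (by linarith) (by linarith) (by ring_nf; nlinarith)
  nlinarith [this]

/-- For `u, û, ũ ∈ (0,1)` with `ũ` between `u` and `û`,
`1/(ũ(1−ũ)) ≤ (u/û + (1−u)/(1−û)) · 1/(u(1−u))`. -/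
theorem stmt_2 (u uhat utilde : ℝ)
    (hu : u ∈ Set.Ioo (0 : ℝ) 1) (huhat : uhat ∈ Set.Ioo (0 : ℝ) 1)
    (hutilde : utilde ∈ Set.Ioo (0 : ℝ) 1)
    (h1 : min u uhat ≤ utilde) (h2 : utilde ≤ max u uhat) :
    1 / (utilde * (1 - utilde)) ≤
      (u / uhat + (1 - u) / (1 - uhat)) * (1 / (u * (1 - u))) := by
  obtain ⟨hu0, hu1⟩ := hu
  obtain ⟨hh0, hh1⟩ := huhat
  obtain ⟨ht0, ht1⟩ := hutilde
  have hA : (0:ℝ) < u * (1 - u) := by nlinarith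
  have hB : (0:ℝ) < uhat * (1 - uhat) := by nlinarith
  have hC : (0:ℝ) < utilde * (1 - utilde) := by nlinarith
  set S := u / uhat + (1 - u) / (1 - uhat) with hSdef
  have hS1 : 1 ≤ S := by
    rw [hSdef, div_add_div _ _ (ne_of_gt hh0) (ne_of_gt (by linarith : (0:ℝ) < 1 - uhat)),
      le_div_iff₀ hB]
    nlinarith [sq_nonneg (uhat - u)]
  have hRA : 1 / (u * (1 - u)) ≤ S * (1 / (u * (1 - u))) :=
    le_mul_of_one_le_left (one_div_pos.mpr hA).le hS1
  have hRB : 1 / (uhat * (1 - uhat)) ≤ S * (1 / (u * (1 - u))) := by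
    rw [mul_one_div, div_le_div_iff₀ hB hA]
    rw [hSdef]
    have h1u : (0:ℝ) < 1 - uhat := by linarith
    rw [div_add_div _ _ (ne_of_gt hh0) (ne_of_gt h1u)]
    rw [div_mul_eq_mul_div, le_div_iff₀ hB]
    nlinarith [sq_nonneg (u - uhat)]
  have hmin : min (u * (1 - u)) (uhat * (1 - uhat)) ≤ utilde * (1 - utilde) := by
    rcases le_total u uhat with h | h
    · rw [min_eq_left h] at h1
      rw [max_eq_right h] at h2
      rcases le_total (u * (1 - u)) (uhat * (1 - uhat)) with hc | hc
      · rw [min_eq_left hc]; exact aux_concave_min u uhat utilde h1 h2 hc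
      · rw [min_eq_right hc]; exact aux_concave_min' u uhat utilde h1 h2 hc
    · rw [min_eq_right h] at h1
      rw [max_eq_left h] at h2
      rcases le_total (u * (1 - u)) (uhat * (1 - uhat)) with hc | hc
      · rw [min_eq_left hc]; exact aux_concave_min' uhat u utilde h1 h2 hc
      · rw [min_eq_right hc]; exact aux_concave_min uhat u utilde h1 h2 hc
  have hminpos : (0:ℝ) < min (u * (1 - u)) (uhat * (1 - uhat)) := lt_min hA hB
  have hstep : 1 / (utilde * (1 - utilde)) ≤ 1 / min (u * (1 - u)) (uhat * (1 - uhat)) :=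
    one_div_le_one_div_of_le hminpos hmin
  rcases le_total (u * (1 - u)) (uhat * (1 - uhat)) with hc | hc
  · rw [min_eq_left hc] at hstep
    exact hstep.trans hRA
  · rw [min_eq_right hc] at hstep
    exact hstep.trans hRB
end

section
/- Let 0 ≤ β ≤ 1 and A ≥ 0, and let φ : (0,1) → ℝ be differentiable with |φ'(v)| ≤ A (v(1−v))^{−β} for all v ∈ (0,1). Then for all u, û ∈ (0,1), |φ(û) − φ(u)| ≤ A · (u/û + (1−u)/(1−û))^β · |û − u| / (u(1−u))^β. -/
/-- If `φ : (0,1) → ℝ` is differentiable with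
`|φ'(v)| ≤ A (v(1−v))^{−β}` for `0 ≤ β ≤ 1`, `A ≥ 0`, then for all `u, û ∈ (0,1)`,
`|φ(û) − φ(u)| ≤ A (u/û + (1−u)/(1−û))^β |û − u| / (u(1−u))^β`. -/
theorem stmt_4 (β A : ℝ) (hβ0 : 0 ≤ β) (hβ1 : β ≤ 1) (hA : 0 ≤ A)
    (φ φ' : ℝ → ℝ)
    (hdiff : ∀ v ∈ Set.Ioo (0 : ℝ) 1, HasDerivAt φ (φ' v) v)
    (hbound : ∀ v ∈ Set.Ioo (0 : ℝ) 1, |φ' v| ≤ A * (v * (1 - v)) ^ (-β)) :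
    ∀ u ∈ Set.Ioo (0 : ℝ) 1, ∀ uhat ∈ Set.Ioo (0 : ℝ) 1,
      |φ uhat - φ u| ≤
        A * (u / uhat + (1 - u) / (1 - uhat)) ^ β * |uhat - u| / (u * (1 - u)) ^ β := by
  intro u hu uhat huhat
  obtain ⟨hu0, hu1⟩ := hu
  obtain ⟨hh0, hh1⟩ := huhat
  have h1u : (0:ℝ) < 1 - u := by linarith
  have h1h : (0:ℝ) < 1 - uhat := by linarith
  set S := u / uhat + (1 - u) / (1 - uhat) with hS
  have hS0 : 0 < S := by positivity
  have huu : (0:ℝ) < u * (1 - u) := by positivity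
  set C := A * (S / (u * (1 - u))) ^ β with hC
  have hsub : Set.uIcc u uhat ⊆ Set.Ioo (0 : ℝ) 1 := by
    intro v hv
    rcases Set.mem_uIcc.mp hv with ⟨h1, h2⟩ | ⟨h1, h2⟩ <;>
      exact ⟨by linarith, by linarith⟩
  have hbd : ∀ v ∈ Set.uIcc u uhat, ‖φ' v‖ ≤ C := by
    intro v hv
    obtain ⟨hv0, hv1⟩ := hsub hv
    have hvv : (0:ℝ) < v * (1 - v) := mul_pos hv0 (by linarith)
    have key : u * (1 - u) ≤ S * (v * (1 - v)) := by
      rw [hS, div_add_div _ _ (ne_of_gt hh0) (ne_of_gt h1h), div_mul_eq_mul_div,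
        le_div_iff₀ (by positivity)]
      rcases Set.mem_uIcc.mp hv with ⟨h1, h2⟩ | ⟨h1, h2⟩
      · have h3 : u * (1 - uhat) ≤ v * (1 - v) :=
          mul_le_mul h1 (by linarith) h1h.le hv0.le
        nlinarith [mul_le_mul_of_nonneg_left h3 (by positivity : (0:ℝ) ≤ uhat * (1 - u)),
          mul_nonneg (mul_nonneg hu0.le h1h.le) hvv.le]
      · have h3 : uhat * (1 - u) ≤ v * (1 - v) :=
          mul_le_mul h1 (by linarith) h1u.le hv0.le
        nlinarith [mul_le_mul_of_nonneg_left h3 (by positivity : (0:ℝ) ≤ u * (1 - uhat)),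
          mul_nonneg (mul_nonneg hh0.le h1u.le) hvv.le]
    have hrpow : (v * (1 - v)) ^ (-β) ≤ (S / (u * (1 - u))) ^ β := by
      rw [Real.rpow_neg hvv.le, ← Real.inv_rpow hvv.le]
      apply Real.rpow_le_rpow (by positivity) _ hβ0
      rw [inv_eq_one_div, div_le_div_iff₀ hvv huu]
      linarith [key]
    calc ‖φ' v‖ = |φ' v| := rfl
      _ ≤ A * (v * (1 - v)) ^ (-β) := hbound v ⟨hv0, hv1⟩
      _ ≤ C := by exact mul_le_mul_of_nonneg_left hrpow hA
  have hderiv : ∀ v ∈ Set.uIcc u uhat, HasDerivWithinAt φ (φ' v) (Set.uIcc u uhat) v :=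
    fun v hv => (hdiff v (hsub hv)).hasDerivWithinAt
  have hmvt := Convex.norm_image_sub_le_of_norm_hasDerivWithin_le hderiv hbd
    (convex_uIcc u uhat) Set.left_mem_uIcc Set.right_mem_uIcc
  have : |φ uhat - φ u| ≤ C * |uhat - u| := hmvt
  calc |φ uhat - φ u| ≤ C * |uhat - u| := this
    _ = A * S ^ β * |uhat - u| / (u * (1 - u)) ^ β := by
        rw [hC, Real.div_rpow hS0.le huu.le]
        ring
end
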